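/- Let V, M be finite-dimensional real vector spaces, s : V × V → ℝ symmetric positive semidefinite with seminorm |||·|||, b : M × V → ℝ bilinear, and |||·|||_1 a norm on M satisfying the inf-sup condition: for each v ∈ M there exists ρ_v ∈ V with b(v,ρ_v) = |||v|||_1² and |||ρ_v||| ≤ β |||v|||_1. Suppose e ∈ M and ε ∈ V satisfy b(e,σ) = ℓ(σ) − s(ε,σ) for all σ ∈ V, where |ℓ(σ)| ≤ C|||σ||| for all σ. Then |||e|||_1 ≤ β(C + |||ε|||). -/

import Mathlib

/-! Test the error equation with the inf-sup witness `ρ` of `e`: then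
`|||e|||₁² = b(e, ρ) = ℓ(ρ) - s(ε, ρ) ≤ (C + |||ε|||) |||ρ||| ≤ β (C + |||ε|||) |||e|||₁`
by Cauchy–Schwarz for `s`, and dividing by `|||e|||₁` gives the estimate. -/

lemma LinearMap.BilinForm.abs_apply_le_sqrt_mul_sqrt {V : Type*} [AddCommGroup V] [Module ℝ V]
    (s : LinearMap.BilinForm ℝ V) (hsym : ∀ x y, s x y = s y x) (hpsd : ∀ x, 0 ≤ s x x)
    (x y : V) : |s x y| ≤ √(s x x) * √(s y y) := by
  rw [← Real.sqrt_mul (hpsd x)]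
  exact Real.abs_le_sqrt (s.apply_sq_le_of_symm hpsd (LinearMap.isSymm_def.2 hsym) x y)

lemma LinearMap.BilinForm.abs_sub_apply_le {V : Type*} [AddCommGroup V] [Module ℝ V]
    (s : LinearMap.BilinForm ℝ V) (hsym : ∀ x y, s x y = s y x) (hpsd : ∀ x, 0 ≤ s x x)
    (ℓ : V → ℝ) (C : ℝ) (hbound : ∀ σ, |ℓ σ| ≤ C * √(s σ σ)) (ε σ : V) :
    |ℓ σ - s ε σ| ≤ (C + √(s ε ε)) * √(s σ σ) :=
  calc |ℓ σ - s ε σ| ≤ |ℓ σ| + |s ε σ| := abs_sub _ _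
    _ ≤ C * √(s σ σ) + √(s ε ε) * √(s σ σ) :=
      add_le_add (hbound σ) (s.abs_apply_le_sqrt_mul_sqrt hsym hpsd ε σ)
    _ = (C + √(s ε ε)) * √(s σ σ) := by ring

lemma le_of_sq_le_mul_of_nonneg {x K : ℝ} (hK : 0 ≤ K) (h : x ^ 2 ≤ K * x) : x ≤ K := by
  by_contra! hlt
  nlinarith

theorem stmt_3_general
    {V M : Type*} [AddCommGroup V] [Module ℝ V]
    [AddCommGroup M] [Module ℝ M]
    (s : V →ₗ[ℝ] V →ₗ[ℝ] ℝ)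
    (hsym : ∀ x y : V, s x y = s y x)
    (hpsd : ∀ x : V, 0 ≤ s x x)
    (b : M →ₗ[ℝ] V →ₗ[ℝ] ℝ)
    (n1 : M → ℝ)
    (β : ℝ) (hβ : 0 < β)
    (hinfsup : ∀ v : M, ∃ ρ : V, b v ρ = (n1 v) ^ 2 ∧ Real.sqrt (s ρ ρ) ≤ β * n1 v)
    (ℓ : V →ₗ[ℝ] ℝ) (C : ℝ) (hC : 0 ≤ C)
    (hbound : ∀ σ : V, |ℓ σ| ≤ C * Real.sqrt (s σ σ))
    (e : M) (ε : V)
    (herr : ∀ σ : V, b e σ = ℓ σ - s ε σ) :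
    n1 e ≤ β * (C + Real.sqrt (s ε ε)) := by
  obtain ⟨ρ, hbρ, hρ⟩ := hinfsup e
  have hCε : 0 ≤ C + √(s ε ε) := by positivity
  refine le_of_sq_le_mul_of_nonneg (by positivity) ?_
  calc n1 e ^ 2 = ℓ ρ - s ε ρ := by rw [← hbρ, herr]
    _ ≤ (C + √(s ε ε)) * √(s ρ ρ) :=
      (le_abs_self _).trans (LinearMap.BilinForm.abs_sub_apply_le s hsym hpsd ℓ C hbound ε ρ)
    _ ≤ (C + √(s ε ε)) * (β * n1 e) := by gcongr
    _ = β * (C + √(s ε ε)) * n1 e := by ring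

/-- Derivation of the primal error estimate from the error equation (Theorem 6.1):
under the inf-sup condition, b(e,σ) = ℓ(σ) − s(ε,σ) with |ℓ(σ)| ≤ C|||σ||| implies
|||e|||₁ ≤ β (C + |||ε|||). -/
theorem stmt_3
    {V M : Type*} [AddCommGroup V] [Module ℝ V] [FiniteDimensional ℝ V]
    [AddCommGroup M] [Module ℝ M] [FiniteDimensional ℝ M]
    (s : V →ₗ[ℝ] V →ₗ[ℝ] ℝ)
    (hsym : ∀ x y : V, s x y = s y x)
    (hpsd : ∀ x : V, 0 ≤ s x x)
    (b : M →ₗ[ℝ] V →ₗ[ℝ] ℝ)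
    (n1 : M → ℝ)
    -- n1 is a norm on M
    (hn1_nonneg : ∀ v, 0 ≤ n1 v)
    (hn1_def : ∀ v, n1 v = 0 → v = 0)
    (hn1_smul : ∀ (a : ℝ) (v : M), n1 (a • v) = |a| * n1 v)
    (hn1_tri : ∀ v w : M, n1 (v + w) ≤ n1 v + n1 w)
    (β : ℝ) (hβ : 0 < β)
    (hinfsup : ∀ v : M, ∃ ρ : V, b v ρ = (n1 v) ^ 2 ∧ Real.sqrt (s ρ ρ) ≤ β * n1 v)
    (ℓ : V →ₗ[ℝ] ℝ) (C : ℝ) (hC : 0 ≤ C)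
    (hbound : ∀ σ : V, |ℓ σ| ≤ C * Real.sqrt (s σ σ))
    (e : M) (ε : V)
    (herr : ∀ σ : V, b e σ = ℓ σ - s ε σ) :
    n1 e ≤ β * (C + Real.sqrt (s ε ε)) :=
  stmt_3_general s hsym hpsd b n1 β hβ hinfsup ℓ C hC hbound e ε herr
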